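/- Let Δ ∈ 2^{−ℕ}, and δ̲, δ̄ ∈ 2^{−ℕ} with δ̲ = Δ δ̄. Let Q ∈ D_{δ̄} and p ∈ D_{δ̲}(Q). Let T ∈ T^Δ be a dyadic Δ-tube and set L(p,T) := {ℓ ∈ 𝒜(2,1) : ℓ ∩ p ≠ ∅ and ℓ ⊂ T}. Then S_Q(L(p,T)) can be covered by C ≲ 1 (an absolute constant number of) dyadic Δ-tubes T₁, …, T_C ∈ T^Δ with |σ(T_j) − σ(T)| ≲ Δ for all 1 ≤ j ≤ C. -/
import Mathlib


open MeasureTheory Metric Set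
open scoped ENNReal NNReal

noncomputable section

abbrev E2 := EuclideanSpace ℝ (Fin 2)

/-- The dyadic square `[iδ, iδ+δ) × [jδ, jδ+δ) ⊆ ℝ²`. -/
def dySq (δ : ℝ) (p : ℤ × ℤ) : Set E2 :=
  {x | x 0 ∈ Ico (p.1 * δ) (p.1 * δ + δ) ∧ x 1 ∈ Ico (p.2 * δ) (p.2 * δ + δ)}

/-- The unit square `[0,1)²`. -/
def unitSq : Set E2 := {x | x 0 ∈ Ico (0:ℝ) 1 ∧ x 1 ∈ Ico (0:ℝ) 1}

/-- The dual square of a dyadic Δ-tube, in the `(slope, intercept)` parameter plane: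
a non-vertical line is identified with its parameters `(a,b)` (`𝐃(a,b) = {y = ax + b}`). -/
def dualSq (Δ : ℝ) (p : ℤ × ℤ) : Set (ℝ × ℝ) :=
  Ico (p.1 * Δ) (p.1 * Δ + Δ) ×ˢ Ico (p.2 * Δ) (p.2 * Δ + Δ)

/-- Membership of the dual square of a dyadic Δ-tube in `[−1,1) × ℝ`, i.e. `T ∈ T^Δ`. -/
def validTube (Δ : ℝ) (p : ℤ × ℤ) : Prop := -1 ≤ p.1 * Δ ∧ p.1 * Δ < 1

/-- The family `L(p,T)` of lines (in line parameters `(a,b)`) meeting the square `p` and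
contained in the tube `T`, i.e. belonging to `𝐃(p_T)`. -/
def linesMeeting (δ' Δ : ℝ) (qp pT : ℤ × ℤ) : Set (ℝ × ℝ) :=
  {ab | ab ∈ dualSq Δ pT ∧ ∃ z ∈ dySq δ' qp, z 1 = ab.1 * z 0 + ab.2}

/-- The action of the homothety `S_Q : Q → [0,1)²`, `Q ∈ D_{δ̄}` with lower-left corner
`(qQ.1 δ̄, qQ.2 δ̄)`, on line parameters: the image of the line `y = ax + b` under `S_Q`
is the line with parameters `(a, (a ⬝ qQ.1 δ̄ + b − qQ.2 δ̄)/δ̄)`. -/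
def lineRescale (δbar : ℝ) (qQ : ℤ × ℤ) (ab : ℝ × ℝ) : ℝ × ℝ :=
  (ab.1, (ab.1 * (qQ.1 * δbar) + ab.2 - qQ.2 * δbar) / δbar)

lemma nest {δ Δ : ℝ} (hδ : 0 < δ) {k : ℕ} (hΔ : Δ = (2:ℝ) ^ (-(k:ℤ))) {n m : ℤ} {w : ℝ}
    (h1 : (n:ℝ) * (Δ * δ) ≤ w) (h2 : w < (n:ℝ) * (Δ * δ) + Δ * δ)
    (h3 : (m:ℝ) * δ ≤ w) (h4 : w < (m:ℝ) * δ + δ) :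
    (m:ℝ) * δ ≤ (n:ℝ) * (Δ * δ) ∧ (n:ℝ) * (Δ * δ) + Δ * δ ≤ (m:ℝ) * δ + δ := by
  have hΔpos : 0 < Δ := by rw [hΔ]; positivity
  have hk : (0:ℝ) < 2 ^ k := by positivity
  have hkey : Δ * 2 ^ k = 1 := by
    rw [hΔ, ← zpow_natCast (2:ℝ) k, ← zpow_add₀ (by norm_num : (2:ℝ) ≠ 0)]
    simp
  have hmn : m * 2 ^ k ≤ n := by
    have hr : (m:ℝ) * 2 ^ k < (n:ℝ) + 1 := by
      have h5 : (m:ℝ) * δ < ((n:ℝ) + 1) * (Δ * δ) := by nlinarith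
      have h6 := mul_lt_mul_of_pos_right h5 hk
      have e : ((n:ℝ) + 1) * (Δ * δ) * 2 ^ k = ((n:ℝ) + 1) * δ * (Δ * 2 ^ k) := by ring
      rw [e, hkey, mul_one] at h6
      refine lt_of_mul_lt_mul_right ?_ hδ.le
      nlinarith [h6]
    have : (m * 2 ^ k : ℤ) < n + 1 := by exact_mod_cast (by push_cast; linarith : ((m * 2 ^ k : ℤ):ℝ) < ((n + 1 : ℤ):ℝ))
    omega
  have hnm : n + 1 ≤ (m + 1) * 2 ^ k := by
    have hr : (n:ℝ) < ((m:ℝ) + 1) * 2 ^ k := by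
      have h5 : (n:ℝ) * (Δ * δ) < ((m:ℝ) + 1) * δ := by nlinarith
      have h6 : (n:ℝ) * Δ < (m:ℝ) + 1 := by
        refine lt_of_mul_lt_mul_right ?_ hδ.le
        nlinarith [h5]
      have h7 := mul_lt_mul_of_pos_right h6 hk
      have e : (n:ℝ) * Δ * 2 ^ k = (n:ℝ) * (Δ * 2 ^ k) := by ring
      rw [e, hkey, mul_one] at h7
      exact h7
    have : (n : ℤ) < (m + 1) * 2 ^ k := by exact_mod_cast (by push_cast; linarith : ((n:ℤ):ℝ) < (((m+1) * 2 ^ k : ℤ):ℝ))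
    omega
  constructor
  · have hc : ((m:ℝ) * 2 ^ k) ≤ (n:ℝ) := by exact_mod_cast (by exact_mod_cast hmn : ((m * 2 ^ k : ℤ):ℝ) ≤ ((n:ℤ):ℝ))
    have h8 := mul_le_mul_of_nonneg_right hc (mul_pos hΔpos hδ).le
    have e : (m:ℝ) * 2 ^ k * (Δ * δ) = (m:ℝ) * δ * (Δ * 2 ^ k) := by ring
    rw [e, hkey, mul_one] at h8
    exact h8
  · have hc : ((n:ℝ) + 1) ≤ ((m:ℝ) + 1) * 2 ^ k := by
      exact_mod_cast (by push_cast; norm_num : ((n + 1 : ℤ):ℝ) = (n:ℝ) + 1) ▸ (by exact_mod_cast hnm : ((n + 1 : ℤ):ℝ) ≤ (((m+1) * 2 ^ k : ℤ):ℝ))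
    have h8 := mul_le_mul_of_nonneg_right hc (mul_pos hΔpos hδ).le
    have e1 : ((m:ℝ) + 1) * 2 ^ k * (Δ * δ) = ((m:ℝ) + 1) * δ * (Δ * 2 ^ k) := by ring
    rw [e1, hkey, mul_one] at h8
    nlinarith [h8]

/-- For `δ̲ = Δ δ̄`, `Q ∈ D_{δ̄}`, `p ∈ D_{δ̲}(Q)` and a dyadic Δ-tube `T`,
the rescaled line family `S_Q(L(p,T))` is covered by an absolutely bounded number of dyadic
Δ-tubes whose slopes differ from `σ(T)` by at most an absolute constant times `Δ`. -/
theorem rescaled_lines_covered_by_tubes :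
    ∃ K : ℕ, 0 < K ∧
      ∀ (kΔ kb : ℕ) (Δ δbar δlow : ℝ),
        Δ = (2:ℝ) ^ (-(kΔ:ℤ)) → δbar = (2:ℝ) ^ (-(kb:ℤ)) → δlow = Δ * δbar →
      ∀ qQ : ℤ × ℤ, dySq δbar qQ ⊆ unitSq →
      ∀ qp : ℤ × ℤ, (dySq δlow qp ∩ dySq δbar qQ).Nonempty →
      ∀ pT : ℤ × ℤ, validTube Δ pT →
        ∃ F : Finset (ℤ × ℤ), F.card ≤ K ∧
          (∀ pj ∈ F, validTube Δ pj ∧ |pj.1 * Δ - pT.1 * Δ| ≤ K * Δ) ∧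
          lineRescale δbar qQ '' linesMeeting δlow Δ qp pT ⊆ ⋃ pj ∈ F, dualSq Δ pj := by
  refine ⟨9, by norm_num, ?_⟩
  intro kΔ kb Δ δbar δlow hΔ hδb hδl qQ hQ qp hpQ pT hT
  have hΔpos : 0 < Δ := by rw [hΔ]; positivity
  have hbpos : 0 < δbar := by rw [hδb]; positivity
  have hD : (0:ℝ) < Δ * δbar := mul_pos hΔpos hbpos
  have hΔ1 : Δ ≤ 1 := by
    have hkey : Δ * 2 ^ kΔ = 1 := by
      rw [hΔ, ← zpow_natCast (2:ℝ) kΔ, ← zpow_add₀ (by norm_num : (2:ℝ) ≠ 0)]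
      simp
    nlinarith [hkey, one_le_pow₀ (by norm_num : (1:ℝ) ≤ 2) (n := kΔ), hΔpos]
  -- nesting: p ⊆ Q coordinatewise
  obtain ⟨w, hwp, hwQ⟩ := hpQ
  simp only [dySq, Set.mem_setOf_eq, Set.mem_Ico] at hwp hwQ
  obtain ⟨⟨hwp0a, hwp0b⟩, ⟨hwp1a, hwp1b⟩⟩ := hwp
  obtain ⟨⟨hwQ0a, hwQ0b⟩, ⟨hwQ1a, hwQ1b⟩⟩ := hwQ
  rw [hδl] at hwp0a hwp0b hwp1a hwp1b
  obtain ⟨hx1, hx2⟩ := nest hbpos hΔ hwp0a hwp0b hwQ0a hwQ0b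
  obtain ⟨hy1, hy2⟩ := nest hbpos hΔ hwp1a hwp1b hwQ1a hwQ1b
  obtain ⟨hTa, hTb⟩ := hT
  -- center of the rescaled intercepts
  obtain ⟨cnum, hcnum⟩ : ∃ c : ℝ, c = (qp.2:ℝ) * (Δ * δbar) - (qQ.2:ℝ) * δbar
      - (pT.1:ℝ) * Δ * ((qp.1:ℝ) * (Δ * δbar) - (qQ.1:ℝ) * δbar) := ⟨_, rfl⟩
  obtain ⟨m₀, hm₀⟩ : ∃ m₀ : ℤ, m₀ = ⌊cnum / (Δ * δbar)⌋ - 4 := ⟨_, rfl⟩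
  refine ⟨(Finset.range 9).image (fun i : ℕ => (pT.1, m₀ + (i:ℤ))), ?_, ?_, ?_⟩
  · exact le_trans Finset.card_image_le (by simp)
  · intro pj hpj
    simp only [Finset.mem_image, Finset.mem_range] at hpj
    obtain ⟨i, _, rfl⟩ := hpj
    refine ⟨⟨hTa, hTb⟩, ?_⟩
    simp only [sub_self, abs_zero]
    positivity
  · rintro x ⟨ab, hab, rfl⟩
    simp only [linesMeeting, dualSq, dySq, Set.mem_setOf_eq, Set.mem_Ico, Set.mem_prod] at hab
    obtain ⟨⟨⟨ha1, ha2⟩, hb1, hb2⟩, z, ⟨⟨hz0a, hz0b⟩, hz1a, hz1b⟩, hzeq⟩ := hab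
    rw [hδl] at hz0a hz0b hz1a hz1b
    obtain ⟨b'num, hb'num⟩ : ∃ b : ℝ, b = ab.1 * ((qQ.1:ℝ) * δbar) + ab.2 - (qQ.2:ℝ) * δbar := ⟨_, rfl⟩
    obtain ⟨m, hm⟩ : ∃ m : ℤ, m = ⌊b'num / (Δ * δbar)⌋ := ⟨_, rfl⟩
    -- estimates on products
    have ha2' : ab.1 ≤ 2 := by linarith
    have ha1' : (-1:ℝ) ≤ ab.1 := by linarith
    have hz0 : (0:ℝ) ≤ z 0 - (qp.1:ℝ) * (Δ * δbar) := by linarith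
    have p1 := mul_le_mul_of_nonneg_right ha2' hz0
    have p2 := mul_le_mul_of_nonneg_right ha1' hz0
    have hxpQ1 : (0:ℝ) ≤ (qp.1:ℝ) * (Δ * δbar) - (qQ.1:ℝ) * δbar := by linarith
    have hxpQ2 : (qp.1:ℝ) * (Δ * δbar) - (qQ.1:ℝ) * δbar ≤ δbar := by nlinarith
    have haa1 : (0:ℝ) ≤ ab.1 - (pT.1:ℝ) * Δ := by linarith
    have haa2 : ab.1 - (pT.1:ℝ) * Δ ≤ Δ := by linarith
    have p3 := mul_nonneg haa1 hxpQ1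
    have p4 := mul_le_mul haa2 hxpQ2 hxpQ1 hΔpos.le
    have hb2eq : ab.2 = z 1 - ab.1 * z 0 := by linarith
    have hub : b'num - cnum ≤ 4 * (Δ * δbar) := by
      rw [hb'num, hcnum, hb2eq]
      linarith [p1, p2, p3, p4, hD.le]
    have hlb : cnum - b'num ≤ 4 * (Δ * δbar) := by
      rw [hb'num, hcnum, hb2eq]
      linarith [p1, p2, p3, p4, hD.le]
    -- floor facts
    have hm_lo : (m:ℝ) * (Δ * δbar) ≤ b'num := by
      rw [hm]
      exact (le_div_iff₀ hD).mp (Int.floor_le (b'num / (Δ * δbar)))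
    have hm_hi : b'num < (m:ℝ) * (Δ * δbar) + Δ * δbar := by
      have h6 := (div_lt_iff₀ hD).mp (Int.lt_floor_add_one (b'num / (Δ * δbar)))
      rw [hm]
      linarith [h6]
    have hrange1 : m₀ ≤ m := by
      have hle : cnum / (Δ * δbar) ≤ b'num / (Δ * δbar) + 4 := by
        rw [div_add' _ _ _ hD.ne']
        exact (div_le_div_iff_of_pos_right hD).mpr (by linarith)
      have h7 : ⌊cnum / (Δ * δbar)⌋ ≤ ⌊b'num / (Δ * δbar) + ((4:ℤ):ℝ)⌋ := Int.floor_mono (by push_cast; linarith)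
      rw [Int.floor_add_intCast, ← hm] at h7
      rw [hm₀]
      linarith [h7]
    have hrange2 : m ≤ m₀ + 8 := by
      have hle : b'num / (Δ * δbar) ≤ cnum / (Δ * δbar) + 4 := by
        rw [div_add' _ _ _ hD.ne']
        exact (div_le_div_iff_of_pos_right hD).mpr (by linarith)
      have h7 : ⌊b'num / (Δ * δbar)⌋ ≤ ⌊cnum / (Δ * δbar) + ((4:ℤ):ℝ)⌋ := Int.floor_mono (by push_cast; linarith)
      rw [Int.floor_add_intCast, ← hm] at h7
      rw [hm₀]
      linarith [h7]
    refine Set.mem_iUnion₂.mpr ⟨(pT.1, m), ?_, ?_⟩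
    · refine Finset.mem_image.mpr ⟨(m - m₀).toNat, Finset.mem_range.mpr (by omega), ?_⟩
      simp only [Prod.mk.injEq]
      exact ⟨trivial, by omega⟩
    · simp only [lineRescale, dualSq, Set.mem_prod, Set.mem_Ico]
      refine ⟨⟨ha1, ha2⟩, ?_, ?_⟩
      · rw [le_div_iff₀ hbpos]
        rw [hb'num] at hm_lo
        linarith [hm_lo]
      · rw [div_lt_iff₀ hbpos]
        rw [hb'num] at hm_hi
        linarith [hm_hi]


end
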